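/- Let r ≥ 2 and n, t ≥ 1 be integers, let k̂_1,…,k̂_r ∈ [n], and let 𝔉_1 ⊆ [n]^{(≤k̂_1)},…,𝔉_r ⊆ [n]^{(≤k̂_r)} be shifted non-empty r-cross t-intersecting families with maximal necessary intersection point a_*. Let j ∈ [r] and k ∈ [n] with n > k + min_{i∈[r]\{j}} k̂_i − t. Then for every F ∈ 𝔉_j(a_*) with |F| ≤ k there exists s ∈ [n] \ [a_*] such that σ_{s a_*}(F) ∉ 𝔉_j. -/

import Mathlib

open Finset

/-- The shift operation `σ_{ij}` on a set `F ⊆ ℕ`. -/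
def shift (i j : ℕ) (F : Finset ℕ) : Finset ℕ :=
  if j ∈ F ∧ i ∉ F then insert i (F.erase j) else F

/-- The shift operation on a family. -/
def shiftFam (i j : ℕ) (𝔉 : Finset (Finset ℕ)) : Finset (Finset ℕ) :=
  𝔉.image (shift i j) ∪ 𝔉.filter (fun F => shift i j F ∈ 𝔉)

/-- A family of subsets of `[n] = {1,…,n}` is shifted. -/
def IsShifted (n : ℕ) (𝔉 : Finset (Finset ℕ)) : Prop :=
  ∀ i j : ℕ, 1 ≤ i → i < j → j ≤ n → ∀ F ∈ 𝔉, shift i j F ∈ 𝔉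

/-- The intersection `⋂_{i ∈ s} G i` (for `s` nonempty). -/
def interOn {r : ℕ} (s : Finset (Fin r)) (G : Fin r → Finset ℕ) : Finset ℕ :=
  (s.sup G).filter fun x => ∀ i ∈ s, x ∈ G i

/-- The intersection `⋂_{i} G i`. -/
def interAll {r : ℕ} (G : Fin r → Finset ℕ) : Finset ℕ :=
  interOn Finset.univ G

/-- Families `𝔉 0, …, 𝔉 (r-1)` are `r`-cross `t`-intersecting. -/
def CrossIntersecting {r : ℕ} (t : ℕ) (𝔉 : Fin r → Finset (Finset ℕ)) : Prop :=
  ∀ G : Fin r → Finset ℕ, (∀ i, G i ∈ 𝔉 i) → t ≤ (interAll G).card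

/-- `a` is a necessary intersection point of the cross `t`-intersecting families `𝔉`. -/
def IsNIP {r : ℕ} (t : ℕ) (𝔉 : Fin r → Finset (Finset ℕ)) (a : ℕ) : Prop :=
  ∃ G : Fin r → Finset ℕ, (∀ i, G i ∈ 𝔉 i) ∧
    (Finset.Icc 1 a ∩ interAll G).card = t ∧ a ∈ interAll G

/-- An intersecting family. -/
def Intersecting' (𝔉 : Finset (Finset ℕ)) : Prop :=
  ∀ F ∈ 𝔉, ∀ F' ∈ 𝔉, (F ∩ F').Nonempty

/-- `a` is a necessary intersection point of the intersecting family `𝔉`. -/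
def IsNIP1 (𝔉 : Finset (Finset ℕ)) (a : ℕ) : Prop :=
  ∃ F ∈ 𝔉, ∃ F' ∈ 𝔉, (Finset.Icc 1 a ∩ F ∩ F').card = 1 ∧ a ∈ F ∩ F'

/-- `A_{n,a,t} = {F ⊆ [n] : |F ∩ [a]| ≥ t}`. -/
def famA (n a t : ℕ) : Finset (Finset ℕ) :=
  (Finset.Icc 1 n).powerset.filter (fun F => t ≤ (F ∩ Finset.Icc 1 a).card)

/-- `B_{n,a} = {F ⊆ [n] : [a] ⊆ F}`. -/
def famB (n a : ℕ) : Finset (Finset ℕ) :=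
  (Finset.Icc 1 n).powerset.filter (fun F => Finset.Icc 1 a ⊆ F)

/-- `F ∈ 𝔉 j` depends on `a`, i.e. `F ∈ 𝔉_j(a)`. -/
def DependsOn' {r : ℕ} (t : ℕ) (𝔉 : Fin r → Finset (Finset ℕ)) (a : ℕ) (j : Fin r)
    (F : Finset ℕ) : Prop :=
  F ∈ 𝔉 j ∧ ∃ G : Fin r → Finset ℕ, (∀ i, i ≠ j → G i ∈ 𝔉 i) ∧
    (Finset.Icc 1 a ∩ F ∩ interOn (Finset.univ.erase j) G).card = t ∧
    a ∈ F ∩ interOn (Finset.univ.erase j) G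

lemma erase_univ_nonempty {r : ℕ} (hr : 2 ≤ r) (i : Fin r) :
    (Finset.univ.erase i).Nonempty := by
  rw [← Finset.card_pos, Finset.card_erase_of_mem (Finset.mem_univ i),
    Finset.card_univ, Fintype.card_fin]
  omega


/-!
Let `G` witness `F ∈ 𝔉_j(a_*)` and let `ℓ ≠ j` minimise `k̂_ℓ`. Since `F ∩ G_ℓ` contains the
`t` points of `[a_*] ∩ F ∩ ⋂_{i ≠ j} G_i`, we get `|F ∪ G_ℓ| ≤ k + k̂_ℓ - t < n`, so some
`s ∈ [n]` lies outside `F ∪ G_ℓ`. If `F' = F - a_* + s` were in `𝔉_j`, replacing `F` by `F'`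
in `G` would give an intersection `(F ∩ ⋂_{i ≠ j} G_i) - a_*` of size at least `t` but with
only `t - 1` points in `[a_*]`; its smallest point beyond `a_*` would be a necessary
intersection point above `a_*`. So `F' ∉ 𝔉_j`, and shiftedness then forces `s > a_*`.
-/

theorem shift_of_mem_of_notMem {i j : ℕ} {F : Finset ℕ} (hj : j ∈ F) (hi : i ∉ F) :
    shift i j F = insert i (F.erase j) :=
  if_pos ⟨hj, hi⟩

section Intersections

variable {r : ℕ}

theorem mem_interOn {s : Finset (Fin r)} (hs : s.Nonempty) {G : Fin r → Finset ℕ} {x : ℕ} :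
    x ∈ interOn s G ↔ ∀ i ∈ s, x ∈ G i := by
  obtain ⟨i, hi⟩ := hs
  simp only [interOn, mem_filter, mem_sup, and_iff_right_iff_imp]
  exact fun h => ⟨i, hi, h i hi⟩

theorem interOn_update_of_notMem {s : Finset (Fin r)} {j : Fin r} (hj : j ∉ s)
    (G : Fin r → Finset ℕ) (F : Finset ℕ) :
    interOn s (Function.update G j F) = interOn s G := by
  have hG : ∀ i ∈ s, Function.update G j F i = G i := fun i hi =>
    Function.update_of_ne (ne_of_mem_of_not_mem hi hj) F G
  simp only [interOn, sup_congr rfl hG]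
  exact filter_congr fun x _ => forall₂_congr fun i hi => by rw [hG i hi]

theorem interAll_eq_inter_interOn_erase (hr : 2 ≤ r) (G : Fin r → Finset ℕ) (j : Fin r) :
    interAll G = G j ∩ interOn (univ.erase j) G := by
  ext x
  rw [mem_inter, interAll, mem_interOn ⟨j, mem_univ j⟩,
    mem_interOn (erase_univ_nonempty hr j)]
  constructor
  · exact fun h => ⟨h j (mem_univ j), fun i _ => h i (mem_univ i)⟩
  · rintro ⟨hj, h⟩ i -
    obtain rfl | hij := eq_or_ne i j
    · exact hj
    · exact h i (mem_erase.2 ⟨hij, mem_univ i⟩)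

theorem interAll_update_eq_inter_interOn_erase (hr : 2 ≤ r) (G : Fin r → Finset ℕ)
    (j : Fin r) (F : Finset ℕ) :
    interAll (Function.update G j F) = F ∩ interOn (univ.erase j) G := by
  rw [interAll_eq_inter_interOn_erase hr, Function.update_self,
    interOn_update_of_notMem (notMem_erase j univ)]

end Intersections

/-- The witness `b` is the first point of `Z` beyond `a`. -/
theorem exists_lt_card_Icc_inter_eq_succ {Z : Finset ℕ} {a : ℕ} (h0 : 0 ∉ Z)
    (h : (Icc 1 a ∩ Z).card < Z.card) :
    ∃ b ∈ Z, a < b ∧ (Icc 1 b ∩ Z).card = (Icc 1 a ∩ Z).card + 1 := by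
  have hne : (Z \ Icc 1 a).Nonempty := by
    rw [nonempty_iff_ne_empty, Ne, sdiff_eq_empty_iff_subset]
    intro hZ
    rw [inter_eq_right.2 hZ] at h
    exact lt_irrefl _ h
  obtain ⟨b, hb, hbmin⟩ : ∃ b ∈ Z \ Icc 1 a, ∀ x ∈ Z \ Icc 1 a, b ≤ x :=
    ⟨_, min'_mem _ hne, fun x hx => min'_le _ x hx⟩
  obtain ⟨hbZ, hba⟩ := mem_sdiff.1 hb
  have hb0 : b ≠ 0 := fun h => h0 (h ▸ hbZ)
  have hab : a < b := by
    rw [mem_Icc] at hba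
    omega
  refine ⟨b, hbZ, hab, ?_⟩
  have hIcc : Icc 1 b ∩ Z = insert b (Icc 1 a ∩ Z) := by
    ext x
    simp only [mem_inter, mem_insert, mem_Icc]
    constructor
    · rintro ⟨⟨hx1, hxb⟩, hxZ⟩
      by_cases hxa : x ≤ a
      · exact Or.inr ⟨⟨hx1, hxa⟩, hxZ⟩
      · have hxa' : x ∉ Icc 1 a := by rw [mem_Icc]; omega
        exact Or.inl (le_antisymm hxb (hbmin x (mem_sdiff.2 ⟨hxZ, hxa'⟩)))
    · rintro (rfl | ⟨⟨hx1, hxa⟩, hxZ⟩)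
      · exact ⟨⟨by omega, le_rfl⟩, hbZ⟩
      · exact ⟨⟨hx1, by omega⟩, hxZ⟩
  rw [hIcc, card_insert_of_notMem fun h => hba (mem_inter.1 h).1]

theorem exists_isNIP_gt_of_insert_erase_mem {r t : ℕ} (hr : 2 ≤ r)
    {𝔉 : Fin r → Finset (Finset ℕ)} (hcross : CrossIntersecting t 𝔉) {a s : ℕ} {j : Fin r}
    {F : Finset ℕ} (hF0 : 0 ∉ F) {G : Fin r → Finset ℕ} (hG : ∀ i, i ≠ j → G i ∈ 𝔉 i)
    (hcard : (Icc 1 a ∩ F ∩ interOn (univ.erase j) G).card = t)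
    (ha : a ∈ F ∩ interOn (univ.erase j) G) (hs : s ∉ interOn (univ.erase j) G)
    (hmem : insert s (F.erase a) ∈ 𝔉 j) :
    ∃ b, a < b ∧ IsNIP t 𝔉 b := by
  set Y := interOn (univ.erase j) G
  have hG' : ∀ i, Function.update G j (insert s (F.erase a)) i ∈ 𝔉 i := by
    intro i
    obtain rfl | hij := eq_or_ne i j
    · rwa [Function.update_self]
    · rw [Function.update_of_ne hij]
      exact hG i hij
  have hinter : interAll (Function.update G j (insert s (F.erase a))) = (F ∩ Y).erase a := by
    rw [interAll_update_eq_inter_interOn_erase hr, insert_inter_of_notMem hs,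
      erase_inter]
  have hbelow : (Icc 1 a ∩ (F ∩ Y).erase a).card + 1 = t := by
    have ha' : a ∈ Icc 1 a ∩ F ∩ Y := by
      rw [inter_assoc, mem_inter, mem_Icc]
      exact ⟨⟨Nat.pos_of_ne_zero fun h => hF0 (h ▸ (mem_inter.1 ha).1), le_rfl⟩, ha⟩
    rw [inter_erase, ← inter_assoc, card_erase_add_one ha', hcard]
  have hall : t ≤ ((F ∩ Y).erase a).card := hinter ▸ hcross _ hG'
  obtain ⟨b, hb, hab, hbcard⟩ := exists_lt_card_Icc_inter_eq_succ
    (Z := (F ∩ Y).erase a) (a := a) (fun h => hF0 (mem_inter.1 (mem_of_mem_erase h)).1) (by omega)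
  exact ⟨b, hab, _, hG', by rw [hinter, hbcard, hbelow], hinter ▸ hb⟩

theorem exists_mem_Icc_notMem_union {A B : Finset ℕ} {n : ℕ}
    (h : A.card + B.card < n + (A ∩ B).card) : ∃ s ∈ Icc 1 n, s ∉ A ∧ s ∉ B := by
  have hlt : (A ∪ B).card < (Icc 1 n).card := by
    have := card_union_add_card_inter A B
    rw [Nat.card_Icc]
    omega
  obtain ⟨s, hs, hsAB⟩ := exists_mem_notMem_of_card_lt_card hlt
  exact ⟨s, hs, not_or.1 (mem_union.not.1 hsAB)⟩

theorem exists_shift_not_mem_cross_general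
    (r n t : ℕ) (hr : 2 ≤ r)
    (khat : Fin r → ℕ)
    (𝔉 : Fin r → Finset (Finset ℕ))
    (hsub : ∀ i, 𝔉 i ⊆ (Finset.Icc 1 n).powerset.filter (fun F => F.card ≤ khat i))
    (hshift : ∀ i, IsShifted n (𝔉 i))
    (hcross : CrossIntersecting t 𝔉)
    (astar : ℕ) (hmax : ∀ b, IsNIP t 𝔉 b → b ≤ astar)
    (j : Fin r) (k : ℕ)
    (hbound : k + (Finset.univ.erase j).inf' (erase_univ_nonempty hr j) khat < n + t)
    (F : Finset ℕ) (hdep : DependsOn' t 𝔉 astar j F) (hcard : F.card ≤ k) :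
    ∃ s : ℕ, astar < s ∧ s ≤ n ∧ shift s astar F ∉ 𝔉 j := by
  obtain ⟨hF, G, hG, hcardX, haX⟩ := hdep
  obtain ⟨i, hi, hmin⟩ := exists_mem_eq_inf' (erase_univ_nonempty hr j) khat
  have hij : i ≠ j := (mem_erase.1 hi).1
  have hFsub : F ⊆ Icc 1 n := mem_powerset.1 (mem_filter.1 (hsub j hF)).1
  have hGcard : (G i).card ≤ khat i := (mem_filter.1 (hsub i (hG i hij))).2
  have hYG : interOn (univ.erase j) G ⊆ G i := fun x hx =>
    (mem_interOn (erase_univ_nonempty hr j)).1 hx i hi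
  have hFG : t ≤ (F ∩ G i).card :=
    hcardX ▸ card_le_card (inter_subset_inter inter_subset_right hYG)
  obtain ⟨s, hs, hsF, hsG⟩ := exists_mem_Icc_notMem_union (n := n) (A := F) (B := G i)
    (by omega)
  have haF : astar ∈ F := (mem_inter.1 haX).1
  have hnot : insert s (F.erase astar) ∉ 𝔉 j := fun hmem => by
    obtain ⟨b, hab, hb⟩ := exists_isNIP_gt_of_insert_erase_mem hr hcross
      (fun h => by simpa using hFsub h) hG hcardX haX (fun h => hsG (hYG h)) hmem
    exact absurd (hmax b hb) (not_le.2 hab)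
  rw [← shift_of_mem_of_notMem haF hsF] at hnot
  rw [mem_Icc] at hs
  refine ⟨s, ?_, hs.2, hnot⟩
  by_contra! hsa
  have hsa' : s < astar := lt_of_le_of_ne hsa fun h => hsF (h ▸ haF)
  exact hnot (hshift j s astar hs.1 hsa' (mem_Icc.1 (hFsub haF)).2 F hF)

/-- **Claim 4.1**: for `F ∈ 𝔉_j(a_*)` of size at most `k` there is `s ∈ [n] \ [a_*]`
with `σ_{s a_*}(F) ∉ 𝔉_j`. -/
theorem exists_shift_not_mem_cross
    (r n t : ℕ) (hr : 2 ≤ r) (hn : 1 ≤ n) (ht : 1 ≤ t)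
    (khat : Fin r → ℕ) (hkhat1 : ∀ i, 1 ≤ khat i) (hkhatn : ∀ i, khat i ≤ n)
    (𝔉 : Fin r → Finset (Finset ℕ))
    (hsub : ∀ i, 𝔉 i ⊆ (Finset.Icc 1 n).powerset.filter (fun F => F.card ≤ khat i))
    (hne : ∀ i, (𝔉 i).Nonempty)
    (hshift : ∀ i, IsShifted n (𝔉 i))
    (hcross : CrossIntersecting t 𝔉)
    (astar : ℕ) (hNIP : IsNIP t 𝔉 astar) (hmax : ∀ b, IsNIP t 𝔉 b → b ≤ astar)
    (j : Fin r) (k : ℕ) (hk1 : 1 ≤ k) (hkn : k ≤ n)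
    (hbound : k + (Finset.univ.erase j).inf' (erase_univ_nonempty hr j) khat < n + t)
    (F : Finset ℕ) (hdep : DependsOn' t 𝔉 astar j F) (hcard : F.card ≤ k) :
    ∃ s : ℕ, astar < s ∧ s ≤ n ∧ shift s astar F ∉ 𝔉 j :=
  exists_shift_not_mem_cross_general r n t hr khat 𝔉 hsub hshift hcross astar hmax j k hbound F hdep
    hcard
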